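/- For any vector r ∈ ℝ^{N−1} with entries r_2,…,r_N, the polynomial λ(τ) = ∑_{i=1}^N (A† r)_i L_i(τ) satisfies λ'(1) = −∑_{i=2}^{N−1} M_i(1) r_i. -/

import Mathlib

open Polynomial

/-- `lagL τ i` is the `i`-th Lagrange basis polynomial (of degree `N - 1`)
for the nodes `τ 0, …, τ (N-1)`, satisfying `(lagL τ i).eval (τ j) = δᵢⱼ`. -/
noncomputable def lagL {N : ℕ} (τ : Fin N → ℝ) (i : Fin N) : ℝ[X] :=
  Lagrange.basis Finset.univ τ i

/-- `lagLp τ` is the polynomial `L_p(x) = ∏ᵢ (x - τᵢ)`. -/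
noncomputable def lagLp {N : ℕ} (τ : Fin N → ℝ) : ℝ[X] :=
  ∏ i, (X - C (τ i))

/-- The differentiation matrix `D`, with `D i j = L_j'(τ i)`. -/
noncomputable def matD {N : ℕ} (τ : Fin N → ℝ) : Matrix (Fin N) (Fin N) ℝ :=
  fun i j => (derivative (lagL τ j)).eval (τ i)

/-- The vector `D_p`, with `(D_p) i = L_p'(τ i)`. -/
noncomputable def vecDp {N : ℕ} (τ : Fin N → ℝ) : Fin N → ℝ :=
  fun i => (derivative (lagLp τ)).eval (τ i)

/-- Columns `2, …, N+1` (in 1-based numbering) of the augmented differentiation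
matrix `D̃ = [D  D_p]`: column `j` (0-based, `j < N - 1`) is column `j + 1` of `D`,
and the last column is `D_p`. -/
noncomputable def matDtil2 {N : ℕ} (τ : Fin N → ℝ) : Matrix (Fin N) (Fin N) ℝ :=
  fun i j => if h : (j : ℕ) + 1 < N then matD τ i ⟨(j : ℕ) + 1, h⟩ else vecDp τ i

/-- The quadrature rule with nodes `τ` and weights `w` integrates exactly all
polynomials of degree at most `2 * N - 3` over `[-1, 1]`. -/
def IsQuadrature {N : ℕ} (τ : Fin N → ℝ) (w : Fin N → ℝ) : Prop :=
  ∀ p : ℝ[X], p.natDegree ≤ 2 * N - 3 →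
    ∑ i, w i * p.eval (τ i) = ∫ t in (-1 : ℝ)..1, p.eval t

/-- The integration matrix `A` with rows indexed (0-based) by `i : Fin (N-1)`
corresponding to the node `τ (i+1)`: `A i j = ∫_{-1}^{τ (i+1)} L_j(t) dt`. -/
noncomputable def matA {N : ℕ} (τ : Fin N → ℝ) : Matrix (Fin (N - 1)) (Fin N) ℝ :=
  fun i j => ∫ t in (-1 : ℝ)..(τ ⟨(i : ℕ) + 1, by have := i.isLt; omega⟩), (lagL τ j).eval t

/-- The row vector `A_p`, with `(A_p) j = (1/N) ∏_{k ≠ j} 1 / (τ j - τ k)`. -/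
noncomputable def rowAp {N : ℕ} (τ : Fin N → ℝ) : Fin N → ℝ :=
  fun j => (1 / (N : ℝ)) * ∏ k ∈ Finset.univ.erase j, (τ j - τ k)⁻¹

/-- The matrix `Ã` obtained by stacking `A` on top of the row vector `A_p`. -/
noncomputable def matAtil {N : ℕ} (τ : Fin N → ℝ) : Matrix (Fin N) (Fin N) ℝ :=
  fun i j => if h : (i : ℕ) + 1 < N then matA τ ⟨(i : ℕ), by omega⟩ j else rowAp τ j

/-- The adjoint integration matrix `A† = W⁻¹ Aᵀ W_{2:N}`, with columns indexed
(0-based) by `j : Fin (N-1)` corresponding to the node `τ (j+1)`. -/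
noncomputable def matAdag {N : ℕ} (τ : Fin N → ℝ) (w : Fin N → ℝ) :
    Matrix (Fin N) (Fin (N - 1)) ℝ :=
  fun i j => (w i)⁻¹ * matA τ j i * w ⟨(j : ℕ) + 1, by have := j.isLt; omega⟩

/-- `polyM τ k` is the Lagrange basis polynomial (of degree `N - 3`) for the
interior nodes `τ 1, …, τ (N-2)`, satisfying `(polyM τ k).eval (τ m) = δₖₘ`
for interior indices `m`. -/
noncomputable def polyM {N : ℕ} (τ : Fin N → ℝ) (k : Fin N) : ℝ[X] :=
  Lagrange.basis (Finset.univ.filter fun m : Fin N => 0 < (m : ℕ) ∧ (m : ℕ) < N - 1) τ k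

/-- The polynomial `λ(x) = ∑ᵢ (A† r)ᵢ Lᵢ(x)`. -/
noncomputable def lamP {N : ℕ} (τ : Fin N → ℝ) (w : Fin N → ℝ) (r : Fin (N - 1) → ℝ) : ℝ[X] :=
  ∑ i, C ((matAdag τ w).mulVec r i) * lagL τ i

/-!
Unfolding `A†`, `λ'(1) = ∑ⱼ wⱼ rⱼ G(τⱼ)` with `G(y) = ∫_{-1}^y g` and `g = ∑ᵢ (Lᵢ'(1) / wᵢ) Lᵢ`.
Since `wᵢ g(τᵢ) = Lᵢ'(1)`, the quadrature rule, exact in degree `2N - 3`, gives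
`∫ g p = p'(1)` whenever `deg p ≤ N - 2`. Taking `p = 1` yields `G(1) = 0`, and integrating by
parts against an antiderivative of `q` yields `∫ G q = -q(1)` whenever `deg q ≤ N - 3`.
Applied to `q = Mⱼ`, the quadrature sum of `G Mⱼ` reduces to the single term `wⱼ G(τⱼ)`, because
`G` vanishes at `τ₁ = -1` and `τ_N = 1` and `Mⱼ` at the other interior nodes.
-/

open Finset

namespace Polynomial

variable {K : Type*} [Field K]

noncomputable def antiderivative (p : K[X]) : K[X] :=
  p.sum fun n a => C (a / (n + 1)) * X ^ (n + 1)

theorem derivative_antiderivative [CharZero K] (p : K[X]) : derivative (antiderivative p) = p := by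
  rw [antiderivative, Polynomial.sum, map_sum]
  conv_rhs => rw [← p.sum_C_mul_X_pow_eq, Polynomial.sum]
  refine sum_congr rfl fun n _ => ?_
  rw [derivative_C_mul, derivative_X_pow, ← mul_assoc, ← C_mul, Nat.add_sub_cancel]
  congr 2
  push_cast
  field_simp

theorem natDegree_antiderivative_le (p : K[X]) :
    (antiderivative p).natDegree ≤ p.natDegree + 1 := by
  refine natDegree_sum_le_of_forall_le _ _ fun n hn => (natDegree_C_mul_X_pow_le _ _).trans ?_
  have := le_natDegree_of_mem_supp n hn
  omega

theorem integral_eval_derivative (p : ℝ[X]) (a b : ℝ) :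
    ∫ t in a..b, (derivative p).eval t = p.eval b - p.eval a :=
  intervalIntegral.integral_eq_sub_of_hasDerivAt (fun x _ => p.hasDerivAt x)
    (p.derivative.continuous.intervalIntegrable _ _)

end Polynomial

section LagrangeNodes

variable {N : ℕ} {τ : Fin N → ℝ}

theorem natDegree_lagL (hτ : Function.Injective τ) (i : Fin N) :
    (lagL τ i).natDegree = N - 1 := by
  rw [lagL, Lagrange.natDegree_basis hτ.injOn (mem_univ i), card_univ, Fintype.card_fin]

theorem eval_lagL (hτ : Function.Injective τ) (i j : Fin N) :
    (lagL τ i).eval (τ j) = if i = j then 1 else 0 := by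
  split_ifs with h
  · subst h; exact Lagrange.eval_basis_self hτ.injOn (mem_univ i)
  · exact Lagrange.eval_basis_of_ne h (mem_univ j)

theorem derivative_eq_sum_lagL (hτ : Function.Injective τ) {p : ℝ[X]} (hp : p.natDegree < N) :
    derivative p = ∑ i, C (p.eval (τ i)) * derivative (lagL τ i) := by
  have hdeg : p.degree < (univ : Finset (Fin N)).card := by
    rw [card_univ, Fintype.card_fin]
    exact degree_le_natDegree.trans_lt (by exact_mod_cast hp)
  conv_lhs => rw [Lagrange.eq_interpolate hτ.injOn hdeg]
  simp only [Lagrange.interpolate_apply, derivative_sum, derivative_C_mul, lagL]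

end LagrangeNodes

section Nodes

variable {N : ℕ}

def interiorNodes (N : ℕ) : Finset (Fin N) :=
  univ.filter fun m : Fin N => 0 < (m : ℕ) ∧ (m : ℕ) < N - 1

def rowNode (j : Fin (N - 1)) : Fin N :=
  ⟨j + 1, by omega⟩

theorem card_interiorNodes_le : (interiorNodes N).card ≤ N - 2 := by
  refine (card_le_card_of_injOn Fin.val (t := Ioo 0 (N - 1)) (fun m hm => ?_)
    Fin.val_injective.injOn).trans (by simp; omega)
  simpa [interiorNodes] using hm

theorem sum_rowNode_mul_eq_sum_interiorNodes (hN : 2 ≤ N) (F : Fin N → ℝ) (r : Fin (N - 1) → ℝ)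
    (hF : F ⟨N - 1, by omega⟩ = 0) :
    ∑ j, F (rowNode j) * r j = ∑ k ∈ interiorNodes N, F k * r ⟨k - 1, by omega⟩ := by
  rw [← sum_subset (subset_univ (univ.filter fun j : Fin (N - 1) => (j : ℕ) < N - 2))]
  · refine sum_nbij' rowNode (fun k => ⟨k - 1, by omega⟩) ?_ ?_ ?_ ?_ ?_ <;>
      simp [interiorNodes, rowNode, Fin.ext_iff] <;> omega
  · intro j _ hj
    have : rowNode j = ⟨N - 1, by omega⟩ := by
      simp only [mem_filter, mem_univ, true_and, not_lt] at hj
      ext; simp [rowNode]; omega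
    rw [this, hF, zero_mul]

end Nodes

section DerivativeKernel

variable {N : ℕ} (τ w : Fin N → ℝ) (x : ℝ)

/-- The representer of `p ↦ p'(x)` for the discrete inner product `∑ᵢ wᵢ p(τᵢ) q(τᵢ)`. -/
noncomputable def derivKernel : ℝ[X] :=
  ∑ i, C ((derivative (lagL τ i)).eval x / w i) * lagL τ i

noncomputable def derivKernelPrimitive : ℝ[X] :=
  antiderivative (derivKernel τ w x) - C ((antiderivative (derivKernel τ w x)).eval (-1))

theorem derivative_derivKernelPrimitive :
    derivative (derivKernelPrimitive τ w x) = derivKernel τ w x := by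
  simp [derivKernelPrimitive, derivative_antiderivative]

theorem eval_neg_one_derivKernelPrimitive : (derivKernelPrimitive τ w x).eval (-1) = 0 := by
  simp [derivKernelPrimitive]

theorem eval_derivKernelPrimitive (y : ℝ) :
    (derivKernelPrimitive τ w x).eval y = ∫ t in (-1 : ℝ)..y, (derivKernel τ w x).eval t := by
  rw [← derivative_derivKernelPrimitive, integral_eval_derivative,
    eval_neg_one_derivKernelPrimitive, sub_zero]

variable {τ w}

theorem natDegree_derivKernel_le (hτ : Function.Injective τ) :
    (derivKernel τ w x).natDegree ≤ N - 1 :=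
  natDegree_sum_le_of_forall_le _ _ fun i _ =>
    (natDegree_C_mul_le _ _).trans (natDegree_lagL hτ i).le

theorem natDegree_derivKernelPrimitive_le (hτ : Function.Injective τ) :
    (derivKernelPrimitive τ w x).natDegree ≤ N := by
  rcases N.eq_zero_or_pos with rfl | hN
  · simp [derivKernelPrimitive, derivKernel, antiderivative]
  refine (natDegree_sub_le _ _).trans (max_le ?_ (by simp))
  have := natDegree_derivKernel_le (w := w) x hτ
  have := natDegree_antiderivative_le (derivKernel τ w x)
  omega

theorem weight_mul_eval_derivKernel (hτ : Function.Injective τ) (hw : ∀ i, w i ≠ 0)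
    (j : Fin N) : w j * (derivKernel τ w x).eval (τ j) = (derivative (lagL τ j)).eval x := by
  simp only [derivKernel, eval_finsetSum, eval_mul, eval_C, eval_lagL hτ, mul_ite, mul_one,
    mul_zero, sum_ite_eq', mem_univ, if_true]
  field_simp [hw j]

theorem IsQuadrature.card_pos (hquad : IsQuadrature τ w) : 0 < N := by
  rcases N.eq_zero_or_pos with rfl | hN
  · have := hquad 1 (by simp)
    norm_num at this
  · exact hN

variable (hτ : Function.Injective τ) (hw : ∀ i, w i ≠ 0) (hquad : IsQuadrature τ w)
include hτ hw hquad

theorem integral_derivKernel_mul {p : ℝ[X]} (hp : p.natDegree ≤ N - 2) :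
    ∫ t in (-1 : ℝ)..1, (derivKernel τ w x * p).eval t = (derivative p).eval x := by
  have hg := natDegree_derivKernel_le (w := w) x hτ
  have hdeg : (derivKernel τ w x * p).natDegree ≤ 2 * N - 3 :=
    natDegree_mul_le.trans (by omega)
  have := hquad.card_pos
  rw [← hquad _ hdeg, derivative_eq_sum_lagL hτ (by omega : p.natDegree < N)]
  simp only [eval_finsetSum, eval_mul, eval_C]
  refine sum_congr rfl fun i _ => ?_
  rw [← weight_mul_eval_derivKernel x hτ hw i]
  ring

theorem eval_one_derivKernelPrimitive : (derivKernelPrimitive τ w x).eval 1 = 0 := by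
  rw [eval_derivKernelPrimitive]
  simpa using integral_derivKernel_mul x hτ hw hquad (p := 1) (by simp)

theorem integral_derivKernelPrimitive_mul (hN : 3 ≤ N) {q : ℝ[X]} (hq : q.natDegree ≤ N - 3) :
    ∫ t in (-1 : ℝ)..1, (derivKernelPrimitive τ w x * q).eval t = -q.eval x := by
  set Q := antiderivative q
  have hQ : ∫ t in (-1 : ℝ)..1, (derivKernel τ w x * Q).eval t = q.eval x := by
    rw [integral_derivKernel_mul x hτ hw hquad
      ((natDegree_antiderivative_le q).trans (by omega)), derivative_antiderivative]
  have hparts := integral_eval_derivative (derivKernelPrimitive τ w x * Q) (-1) 1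
  rw [derivative_mul, derivative_derivKernelPrimitive, derivative_antiderivative, eval_mul,
    eval_mul, eval_one_derivKernelPrimitive x hτ hw hquad, eval_neg_one_derivKernelPrimitive]
    at hparts
  simp only [eval_add] at hparts
  rw [intervalIntegral.integral_add ((Polynomial.continuous _).intervalIntegrable _ _)
    ((Polynomial.continuous _).intervalIntegrable _ _), hQ, zero_mul, zero_mul, sub_zero] at hparts
  linarith

theorem weight_mul_eval_derivKernelPrimitive_of_mem_interiorNodes (hN : 3 ≤ N)
    (h0 : τ ⟨0, zero_lt_three.trans_le hN⟩ = -1)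
    (h1 : τ ⟨N - 1, Nat.sub_one_lt (zero_lt_three.trans_le hN).ne'⟩ = 1) {m : Fin N}
    (hm : m ∈ interiorNodes N) :
    w m * (derivKernelPrimitive τ w x).eval (τ m) = -(polyM τ m).eval x := by
  set G := derivKernelPrimitive τ w x
  have hGdeg : G.natDegree ≤ N := natDegree_derivKernelPrimitive_le x hτ
  have hM : polyM τ m = Lagrange.basis (interiorNodes N) τ m := rfl
  have hMdeg : (polyM τ m).natDegree ≤ N - 3 := by
    have := card_interiorNodes_le (N := N)
    rw [hM, Lagrange.natDegree_basis hτ.injOn hm]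
    omega
  have hdeg : (G * polyM τ m).natDegree ≤ 2 * N - 3 :=
    natDegree_mul_le.trans (by omega)
  have hvanish : ∀ i ≠ m, w i * (G * polyM τ m).eval (τ i) = 0 := by
    intro i him
    by_cases hi : i ∈ interiorNodes N
    · rw [eval_mul, hM, Lagrange.eval_basis_of_ne him.symm hi, mul_zero, mul_zero]
    · obtain rfl | rfl : i = ⟨0, by omega⟩ ∨ i = ⟨N - 1, by omega⟩ := by
        simp only [interiorNodes, mem_filter, mem_univ, true_and, not_and_or, not_lt] at hi
        simp only [Fin.ext_iff]
        omega
      · rw [h0, eval_mul, eval_neg_one_derivKernelPrimitive, zero_mul, mul_zero]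
      · rw [h1, eval_mul, eval_one_derivKernelPrimitive x hτ hw hquad, zero_mul, mul_zero]
  calc w m * G.eval (τ m) = ∑ i, w i * (G * polyM τ m).eval (τ i) := by
        rw [sum_eq_single m (fun i _ => hvanish i) (by simp), eval_mul, hM,
          Lagrange.eval_basis_self hτ.injOn hm, mul_one]
    _ = -(polyM τ m).eval x :=
        (hquad _ hdeg).trans (integral_derivKernelPrimitive_mul x hτ hw hquad hN hMdeg)

omit hτ hw hquad

theorem eval_derivKernelPrimitive_eq_sum (y : ℝ) :
    (derivKernelPrimitive τ w x).eval y =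
      ∑ i, (derivative (lagL τ i)).eval x / w i * ∫ t in (-1 : ℝ)..y, (lagL τ i).eval t := by
  simp only [eval_derivKernelPrimitive, derivKernel, eval_finsetSum, eval_mul, eval_C]
  rw [intervalIntegral.integral_finsetSum
    (f := fun i t => (derivative (lagL τ i)).eval x / w i * (lagL τ i).eval t)
    fun i _ => (continuous_const.mul (Polynomial.continuous _)).intervalIntegrable _ _]
  simp only [intervalIntegral.integral_const_mul]

theorem eval_derivative_lamP (r : Fin (N - 1) → ℝ) :
    (derivative (lamP τ w r)).eval x =
      ∑ j, w (rowNode j) * (derivKernelPrimitive τ w x).eval (τ (rowNode j)) * r j := by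
  simp only [lamP, derivative_sum, derivative_C_mul, eval_finsetSum, eval_mul, eval_C,
    Matrix.mulVec, dotProduct, matAdag, sum_mul, eval_derivKernelPrimitive_eq_sum, mul_sum]
  rw [sum_comm]
  refine sum_congr rfl fun j _ => sum_congr rfl fun i _ => ?_
  simp only [matA, rowNode, div_eq_mul_inv]
  ring

end DerivativeKernel

/-- `λ'(1) = -∑_{i=2}^{N-1} Mᵢ(1) rᵢ` (sum over the interior nodes). -/
theorem stmt10 (N : ℕ) (hN : 3 ≤ N) (τ : Fin N → ℝ) (hmono : StrictMono τ)
    (h0 : τ ⟨0, by omega⟩ = -1) (h1 : τ ⟨N - 1, by omega⟩ = 1) (w : Fin N → ℝ) (hw : ∀ i, 0 < w i) (hquad : IsQuadrature τ w) :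
    ∀ r : Fin (N - 1) → ℝ,
      (derivative (lamP τ w r)).eval 1 =
        - ∑ k ∈ Finset.univ.filter (fun k : Fin N => 0 < (k : ℕ) ∧ (k : ℕ) < N - 1),
            (polyM τ k).eval 1 * r ⟨(k : ℕ) - 1, by have := k.isLt; omega⟩ := by
  intro r
  have hτ := hmono.injective
  have hw₀ : ∀ i, w i ≠ 0 := fun i => (hw i).ne'
  have hlast :
      w ⟨N - 1, by omega⟩ * (derivKernelPrimitive τ w 1).eval (τ ⟨N - 1, by omega⟩) = 0 := by
    rw [h1, eval_one_derivKernelPrimitive 1 hτ hw₀ hquad, mul_zero]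
  rw [eval_derivative_lamP, ← sum_neg_distrib]
  refine (sum_rowNode_mul_eq_sum_interiorNodes (by omega)
    (fun k => w k * (derivKernelPrimitive τ w 1).eval (τ k)) r hlast).trans
    (sum_congr rfl fun k hk => ?_)
  rw [weight_mul_eval_derivKernelPrimitive_of_mem_interiorNodes 1 hτ hw₀ hquad hN h0 h1 hk, neg_mul]
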